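/- arXiv:2210.06401 — 2 statements merged into one kernel-verified Lean document; each statement's English description precedes it below -/
import Mathlib

section
/- (Stationary SGD convergence) Assume $l:\mathbb{R}^d \to \mathbb{R}$ is differentiable with $L$-Lipschitz gradient, and the iterates satisfy $\theta_{j+1} = \theta_j - \alpha_{j+1} g_{j+1}$ where each $g_{j+1}$ conditioned on $\theta_j$ is unbiased ($\mathbb{E}[g_{j+1}|\theta_j] = \nabla l(\theta_j)$) with noise bounded by $\|g_{j+1}-\nabla l(\theta_j)\|^2 \le \rho^2$ almost surely, and $0 < \alpha_j < 2/L$ for all $j$. Then $\min_{j \in \{0,\dots,k\}} \mathbb{E}[\|\nabla l(\theta_j)\|^2] \le \frac{2(l(\theta_0) - \mathbb{E}[l(\theta_{k+1})])}{\sum_{j=0}^k (2\alpha_{j+1} - L\alpha_{j+1}^2)} + \frac{L\rho^2 \sum_{j=0}^k \alpha_{j+1}^2}{\sum_{j=0}^k (2\alpha_{j+1} - L\alpha_{j+1}^2)}$. -/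
/-!
The descent lemma `l y ≤ l x + ⟪∇l x, y - x⟫ + L/2 ‖y - x‖²` applied to one SGD step and
integrated gives `E l(θ_{j+1}) ≤ E l(θ_j) - α E⟪∇l(θ_j), g⟫ + L/2 α² E‖g‖²`. Unbiasedness turns
the cross term into `E‖∇l(θ_j)‖²` (pull-out property of conditional expectation) and the noise
bound gives `E‖g‖² ≤ ρ² + E‖∇l(θ_j)‖²`, so `(2α - Lα²) E‖∇l(θ_j)‖² ≤ 2(E l(θ_j) - E l(θ_{j+1})) + Lρ²α²`.
Summing telescopes, and the minimum is at most the `(2α - Lα²)`-weighted average.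
-/

open MeasureTheory Finset
open scoped RealInnerProductSpace

section Smooth

variable {E : Type*} [NormedAddCommGroup E] [InnerProductSpace ℝ E] [CompleteSpace E]
  {l : E → ℝ} {gl : E → E} {L : ℝ}

theorem le_add_inner_add_sq_of_lipschitz_gradient (hgrad : ∀ x, HasGradientAt l (gl x) x)
    (hlip : ∀ x y, ‖gl x - gl y‖ ≤ L * ‖x - y‖) (x y : E) :
    l y ≤ l x + ⟪gl x, y - x⟫ + L / 2 * ‖y - x‖ ^ 2 := by
  set v := y - x
  -- the gap between `l` and its quadratic model along the segment; its derivative is `≤ 0`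
  let φ : ℝ → ℝ := fun t => l (x + t • v) - t * ⟪gl x, v⟫ - L / 2 * t ^ 2 * ‖v‖ ^ 2
  have hφ : ∀ t, HasDerivAt φ (⟪gl (x + t • v) - gl x, v⟫ - L * t * ‖v‖ ^ 2) t := by
    intro t
    have hline : HasDerivAt (fun t : ℝ => x + t • v) v t := by
      simpa using ((hasDerivAt_id t).smul_const v).const_add x
    have hl : HasDerivAt (fun t => l (x + t • v)) ⟪gl (x + t • v), v⟫ t := by
      simpa [InnerProductSpace.toDual_apply_apply, Function.comp_def] using
        (hgrad _).hasFDerivAt.comp_hasDerivAt t hline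
    refine ((hl.sub ((hasDerivAt_id' t).mul_const ⟪gl x, v⟫)).sub
      (((hasDerivAt_pow 2 t).const_mul (L / 2)).mul_const (‖v‖ ^ 2))).congr_deriv ?_
    rw [inner_sub_left]
    ring
  have hanti : AntitoneOn φ (Set.Ici 0) := by
    refine antitoneOn_of_hasDerivWithinAt_nonpos (convex_Ici 0)
      (HasDerivAt.continuousOn fun t _ => hφ t) (fun t _ => (hφ t).hasDerivWithinAt) ?_
    intro t ht
    rw [interior_Ici, Set.mem_Ioi] at ht
    have hgl : ‖gl (x + t • v) - gl x‖ ≤ L * (t * ‖v‖) := by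
      simpa [norm_smul, abs_of_pos ht] using hlip (x + t • v) x
    nlinarith [real_inner_le_norm (gl (x + t • v) - gl x) v,
      mul_le_mul_of_nonneg_right hgl (norm_nonneg v)]
  have hφ01 : φ 1 ≤ φ 0 := hanti Set.self_mem_Ici (Set.mem_Ici.mpr zero_le_one) zero_le_one
  simp only [φ, v, one_smul, one_mul, one_pow, zero_smul, add_zero, zero_mul, sub_zero,
    add_sub_cancel, zero_pow two_ne_zero, mul_zero] at hφ01
  linarith

end Smooth

section Expectation

variable {E : Type*} [NormedAddCommGroup E] [InnerProductSpace ℝ E]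
  {Ω : Type*} {m0 : MeasurableSpace Ω} {μ : Measure Ω}

theorem integrable_inner_of_integrable_norm_sq {X Y : Ω → E}
    (hX : AEStronglyMeasurable X μ) (hY : AEStronglyMeasurable Y μ)
    (hX2 : Integrable (fun ω => ‖X ω‖ ^ 2) μ) (hY2 : Integrable (fun ω => ‖Y ω‖ ^ 2) μ) :
    Integrable (fun ω => ⟪X ω, Y ω⟫) μ := by
  refine ((hX2.add hY2).div_const 2).mono' (hX.inner hY) (ae_of_all _ fun ω => ?_)
  rw [Real.norm_eq_abs, Pi.add_apply]
  nlinarith [abs_real_inner_le_norm (X ω) (Y ω), sq_nonneg (‖X ω‖ - ‖Y ω‖)]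

theorem integral_inner_eq_of_condExp_ae_eq [CompleteSpace E] [IsFiniteMeasure μ]
    {F : MeasurableSpace Ω} (hF : F ≤ m0) {X Y Z : Ω → E} (hX : StronglyMeasurable[F] X)
    (hXY : Integrable (fun ω => ⟪X ω, Y ω⟫) μ) (hY : Integrable Y μ) (hYZ : μ[Y|F] =ᵐ[μ] Z) :
    ∫ ω, ⟪X ω, Y ω⟫ ∂μ = ∫ ω, ⟪X ω, Z ω⟫ ∂μ := by
  rw [← integral_condExp hF]
  refine integral_congr_ae ?_
  filter_upwards [condExp_bilin_of_stronglyMeasurable_left (innerSL ℝ) hX hXY hY, hYZ]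
    with ω hpull hω
  rwa [hω] at hpull

theorem integral_norm_sq_le_of_integral_inner_eq [IsProbabilityMeasure μ] {X Y : Ω → E} {ρ : ℝ}
    (hXY : Integrable (fun ω => ⟪X ω, Y ω⟫) μ)
    (hX2 : Integrable (fun ω => ‖X ω‖ ^ 2) μ) (hY2 : Integrable (fun ω => ‖Y ω‖ ^ 2) μ)
    (hcross : ∫ ω, ⟪X ω, Y ω⟫ ∂μ = ∫ ω, ‖X ω‖ ^ 2 ∂μ)
    (hnoise : ∀ᵐ ω ∂μ, ‖Y ω - X ω‖ ^ 2 ≤ ρ ^ 2) :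
    ∫ ω, ‖Y ω‖ ^ 2 ∂μ ≤ ρ ^ 2 + ∫ ω, ‖X ω‖ ^ 2 ∂μ := by
  have hbound : (fun ω => ‖Y ω‖ ^ 2) ≤ᵐ[μ] fun ω => ρ ^ 2 + (2 * ⟪X ω, Y ω⟫ - ‖X ω‖ ^ 2) := by
    filter_upwards [hnoise] with ω hω
    rw [norm_sub_sq_real, real_inner_comm] at hω
    linarith
  have hI : Integrable (fun ω => 2 * ⟪X ω, Y ω⟫ - ‖X ω‖ ^ 2) μ := (hXY.const_mul 2).sub hX2
  calc ∫ ω, ‖Y ω‖ ^ 2 ∂μ ≤ ∫ ω, ρ ^ 2 + (2 * ⟪X ω, Y ω⟫ - ‖X ω‖ ^ 2) ∂μ :=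
        integral_mono_ae hY2 ((integrable_const _).add hI) hbound
    _ = ρ ^ 2 + ∫ ω, ‖X ω‖ ^ 2 ∂μ := by
        rw [integral_add (integrable_const _) hI,
          integral_sub (hXY.const_mul 2) hX2, integral_const_mul, hcross]
        simp only [integral_const, probReal_univ, one_smul]
        ring

end Expectation

section Step

variable {E : Type*} [NormedAddCommGroup E] [InnerProductSpace ℝ E] [CompleteSpace E]
  {l : E → ℝ} {gl : E → E} {L : ℝ} {Ω : Type*} {m0 : MeasurableSpace Ω} {μ : Measure Ω}

theorem integral_le_of_gradient_step (hgrad : ∀ x, HasGradientAt l (gl x) x)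
    (hlip : ∀ x y, ‖gl x - gl y‖ ≤ L * ‖x - y‖) {θ θ' g : Ω → E} {a : ℝ}
    (hθ' : ∀ ω, θ' ω = θ ω - a • g ω)
    (hlθ : Integrable (fun ω => l (θ ω)) μ) (hlθ' : Integrable (fun ω => l (θ' ω)) μ)
    (hXg : Integrable (fun ω => ⟪gl (θ ω), g ω⟫) μ) (hg2 : Integrable (fun ω => ‖g ω‖ ^ 2) μ) :
    ∫ ω, l (θ' ω) ∂μ ≤ ∫ ω, l (θ ω) ∂μ - a * ∫ ω, ⟪gl (θ ω), g ω⟫ ∂μ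
      + L / 2 * a ^ 2 * ∫ ω, ‖g ω‖ ^ 2 ∂μ := by
  have hpt : ∀ ω, l (θ' ω) ≤ l (θ ω) - a * ⟪gl (θ ω), g ω⟫ + L / 2 * a ^ 2 * ‖g ω‖ ^ 2 := by
    intro ω
    have h := le_add_inner_add_sq_of_lipschitz_gradient hgrad hlip (θ ω) (θ' ω)
    rw [hθ'] at h ⊢
    rwa [sub_sub_cancel_left, inner_neg_right, real_inner_smul_right, norm_neg, norm_smul,
      mul_pow, Real.norm_eq_abs, sq_abs, ← sub_eq_add_neg, ← mul_assoc] at h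
  have hI : Integrable (fun ω => l (θ ω) - a * ⟪gl (θ ω), g ω⟫) μ := hlθ.sub (hXg.const_mul a)
  calc ∫ ω, l (θ' ω) ∂μ
      ≤ ∫ ω, l (θ ω) - a * ⟪gl (θ ω), g ω⟫ + L / 2 * a ^ 2 * ‖g ω‖ ^ 2 ∂μ :=
        integral_mono hlθ' (hI.add (hg2.const_mul _)) hpt
    _ = _ := by
        rw [integral_add hI (hg2.const_mul _), integral_sub hlθ (hXg.const_mul a),
          integral_const_mul, integral_const_mul]

theorem sgd_step_descent [IsProbabilityMeasure μ] (hL : 0 ≤ L)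
    (hgrad : ∀ x, HasGradientAt l (gl x) x) (hlip : ∀ x y, ‖gl x - gl y‖ ≤ L * ‖x - y‖)
    {F : MeasurableSpace Ω} (hF : F ≤ m0) {θ θ' g : Ω → E} {a ρ : ℝ}
    (hθ' : ∀ ω, θ' ω = θ ω - a • g ω) (hX : StronglyMeasurable[F] fun ω => gl (θ ω))
    (hunbiased : μ[g|F] =ᵐ[μ] fun ω => gl (θ ω))
    (hnoise : ∀ᵐ ω ∂μ, ‖g ω - gl (θ ω)‖ ^ 2 ≤ ρ ^ 2)
    (hlθ : Integrable (fun ω => l (θ ω)) μ) (hlθ' : Integrable (fun ω => l (θ' ω)) μ)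
    (hX2 : Integrable (fun ω => ‖gl (θ ω)‖ ^ 2) μ) (hg : Integrable g μ)
    (hg2 : Integrable (fun ω => ‖g ω‖ ^ 2) μ) :
    (2 * a - L * a ^ 2) * ∫ ω, ‖gl (θ ω)‖ ^ 2 ∂μ
      ≤ 2 * (∫ ω, l (θ ω) ∂μ - ∫ ω, l (θ' ω) ∂μ) + L * ρ ^ 2 * a ^ 2 := by
  have hXg := integrable_inner_of_integrable_norm_sq (hX.mono hF).aestronglyMeasurable
    hg.aestronglyMeasurable hX2 hg2
  have hcross : ∫ ω, ⟪gl (θ ω), g ω⟫ ∂μ = ∫ ω, ‖gl (θ ω)‖ ^ 2 ∂μ := by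
    simp_rw [integral_inner_eq_of_condExp_ae_eq hF hX hXg hg hunbiased,
      real_inner_self_eq_norm_sq]
  have hmoment := integral_norm_sq_le_of_integral_inner_eq hXg hX2 hg2 hcross hnoise
  have hdescent := integral_le_of_gradient_step hgrad hlip hθ' hlθ hlθ' hXg hg2
  rw [hcross] at hdescent
  nlinarith [mul_le_mul_of_nonneg_left hmoment (by positivity : 0 ≤ L / 2 * a ^ 2)]

end Step

theorem inf'_range_le_of_telescoping {c G A b : ℕ → ℝ} (hc : ∀ j, 0 < c j)
    (hstep : ∀ j, c j * G j ≤ A j - A (j + 1) + b j) (k : ℕ) :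
    (range (k + 1)).inf' nonempty_range_add_one G
      ≤ (A 0 - A (k + 1) + ∑ j ∈ range (k + 1), b j) / ∑ j ∈ range (k + 1), c j := by
  rw [le_div_iff₀ (sum_pos (fun j _ => hc j) nonempty_range_add_one), mul_sum]
  calc ∑ j ∈ range (k + 1), (range (k + 1)).inf' nonempty_range_add_one G * c j
      ≤ ∑ j ∈ range (k + 1), c j * G j := sum_le_sum fun j hj => by
        rw [mul_comm]; exact mul_le_mul_of_nonneg_left (inf'_le G hj) (hc j).le
    _ ≤ ∑ j ∈ range (k + 1), (A j - A (j + 1) + b j) := sum_le_sum fun j _ => hstep j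
    _ = A 0 - A (k + 1) + ∑ j ∈ range (k + 1), b j := by
        rw [sum_add_distrib, sum_range_sub']

/-- Stationary SGD convergence (Theorem 2 of the paper): for an `L`-smooth loss,
unbiased stochastic gradients with noise bounded by `ρ²`, and step sizes `0 < α_j < 2/L`,
the minimum expected squared gradient norm over the first `k+1` iterates is bounded by
`T_1 + T_2`. -/
theorem stmt4 {d : ℕ} {Ω : Type*} [m0 : MeasurableSpace Ω] (μ : Measure Ω)
    [IsProbabilityMeasure μ]
    (l : EuclideanSpace ℝ (Fin d) → ℝ)
    (gl : EuclideanSpace ℝ (Fin d) → EuclideanSpace ℝ (Fin d)) (L ρ : ℝ)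
    (hgrad : ∀ x, HasGradientAt l (gl x) x)
    (hlip : ∀ x y, ‖gl x - gl y‖ ≤ L * ‖x - y‖)
    (α : ℕ → ℝ) (hα : ∀ j, 0 < α j ∧ α j < 2 / L)
    (θ0 : EuclideanSpace ℝ (Fin d))
    (θ g : ℕ → Ω → EuclideanSpace ℝ (Fin d))
    (F : ℕ → MeasurableSpace Ω) (hF : ∀ j, F j ≤ m0)
    (hθ0 : ∀ ω, θ 0 ω = θ0)
    (hiter : ∀ j ω, θ (j + 1) ω = θ j ω - α (j + 1) • g (j + 1) ω)
    (hmeas : ∀ j, StronglyMeasurable[F j] (θ j))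
    (hunbiased : ∀ j, μ[g (j + 1)|F j] =ᵐ[μ] fun ω => gl (θ j ω))
    (hnoise : ∀ j, ∀ᵐ ω ∂μ, ‖g (j + 1) ω - gl (θ j ω)‖ ^ 2 ≤ ρ ^ 2)
    (hintl : ∀ j, Integrable (fun ω => l (θ j ω)) μ)
    (hintgl : ∀ j, Integrable (fun ω => ‖gl (θ j ω)‖ ^ 2) μ)
    (hintg : ∀ j, Integrable (g j) μ)
    (hintg2 : ∀ j, Integrable (fun ω => ‖g j ω‖ ^ 2) μ)
    (k : ℕ) :
    (Finset.range (k + 1)).inf' (Finset.nonempty_range_iff.mpr k.succ_ne_zero)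
        (fun j => ∫ ω, ‖gl (θ j ω)‖ ^ 2 ∂μ)
      ≤ 2 * (l θ0 - ∫ ω, l (θ (k + 1) ω) ∂μ) /
          (∑ j ∈ Finset.range (k + 1), (2 * α (j + 1) - L * α (j + 1) ^ 2))
        + L * ρ ^ 2 * (∑ j ∈ Finset.range (k + 1), α (j + 1) ^ 2) /
          (∑ j ∈ Finset.range (k + 1), (2 * α (j + 1) - L * α (j + 1) ^ 2)) := by
  have hL : 0 < L := (div_pos_iff_of_pos_left two_pos).mp ((hα 0).1.trans (hα 0).2)
  have hglc : Continuous gl := (LipschitzWith.of_dist_le_mul (K := ⟨L, hL.le⟩) fun x y => by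
    rw [dist_eq_norm, dist_eq_norm]; exact hlip x y).continuous
  have hweight : ∀ j, 0 < 2 * α (j + 1) - L * α (j + 1) ^ 2 := fun j => by
    have := (lt_div_iff₀ hL).mp (hα (j + 1)).2
    nlinarith [(hα (j + 1)).1]
  have hstep := fun j => sgd_step_descent hL.le hgrad hlip (hF j) (hiter j)
    (hglc.comp_stronglyMeasurable (hmeas j)) (hunbiased j) (hnoise j) (hintl j) (hintl (j + 1))
    (hintgl j) (hintg (j + 1)) (hintg2 (j + 1))
  refine (inf'_range_le_of_telescoping (A := fun j => 2 * ∫ ω, l (θ j ω) ∂μ)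
    (b := fun j => L * ρ ^ 2 * α (j + 1) ^ 2) hweight (fun j => by linarith [hstep j]) k).trans_eq ?_
  simp only [hθ0, integral_const, probReal_univ, one_smul]
  rw [← add_div, mul_sub, mul_sum]
end

section
/- (Non-stationary SGD convergence) Let $l_k:\mathbb{R}^d\to\mathbb{R}$, $k\ge 1$, be differentiable with common gradient-Lipschitz constant $L$, satisfying $|l_{k+1}(\theta) - l_k(\theta)| \le \chi_k$ for all $\theta$ and $k$. Let $\theta_{j+1} = \theta_j - \alpha_{j+1} g_{j+1}$ where each $g_{j+1}$ conditioned on $\theta_j$ is an unbiased estimate of $\nabla l_{j+1}(\theta_j)$ with noise bounded by $\rho^2$ almost surely, and $0 < \alpha_j < 2/L$. Then $\min_{j\in\{0,\dots,k\}} \mathbb{E}[\|\nabla l_{j+1}(\theta_j)\|^2] \le \frac{2(l_1(\theta_0) - \mathbb{E}[l_{k+2}(\theta_{k+1})]) + L\rho^2\sum_{j=0}^k \alpha_{j+1}^2 + 2\sum_{j=0}^k \chi_{j+1}}{\sum_{j=0}^k(2\alpha_{j+1} - L\alpha_{j+1}^2)}$. -/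
/-!
Along the segment from `x` to `y`, an `L`-Lipschitz gradient gives the descent inequality
`f y ≤ f x + ⟪∇f x, y - x⟫ + L/2 ‖y - x‖²`. Take `x = θ_j`, `y = θ_{j+1} = θ_j - α g` and average:
since `E[g | F_j] = ∇l(θ_j)` with `∇l(θ_j)` being `F_j`-measurable, `E⟪∇l(θ_j), g⟫ = E‖∇l(θ_j)‖²`
and `E‖g‖² = E‖∇l(θ_j)‖² + E‖g - ∇l(θ_j)‖² ≤ E‖∇l(θ_j)‖² + ρ²`. With the drift bound
`l_{j+2} ≤ l_{j+1} + χ_{j+1}` this is the one-step estimate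
`(2α - Lα²) E‖∇l_{j+1}(θ_j)‖² ≤ 2 (E l_{j+1}(θ_j) - E l_{j+2}(θ_{j+1})) + Lρ²α² + 2χ_{j+1}`.
Summing over `j` telescopes the losses, and the minimum is at most the weighted average.
-/

open MeasureTheory Finset
open scoped InnerProductSpace

section DescentLemma

variable {E : Type*} [NormedAddCommGroup E] [InnerProductSpace ℝ E] [CompleteSpace E]

theorem le_add_inner_add_half_mul_norm_sq_of_lipschitz_gradient {f : E → ℝ} {f' : E → E}
    {L : ℝ} (hf : ∀ x, HasGradientAt f (f' x) x) (hlip : ∀ x y, ‖f' x - f' y‖ ≤ L * ‖x - y‖)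
    (x y : E) : f y ≤ f x + ⟪f' x, y - x⟫_ℝ + L / 2 * ‖y - x‖ ^ 2 := by
  set v := y - x
  set φ : ℝ → ℝ := fun t => f (x + t • v) - t * ⟪f' x, v⟫_ℝ - L / 2 * t ^ 2 * ‖v‖ ^ 2
  have hφ : ∀ t, HasDerivAt φ (⟪f' (x + t • v) - f' x, v⟫_ℝ - L * t * ‖v‖ ^ 2) t := by
    intro t
    have hline : HasDerivAt (fun t : ℝ => x + t • v) v t := by
      simpa using ((hasDerivAt_id t).smul_const v).const_add x
    have hf_line := (hf (x + t • v)).hasFDerivAt.comp_hasDerivAt t hline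
    simp only [InnerProductSpace.toDual_apply_apply] at hf_line
    refine ((hf_line.sub ((hasDerivAt_id t).mul_const ⟪f' x, v⟫_ℝ)).sub
      (((hasDerivAt_pow 2 t).const_mul (L / 2)).mul_const (‖v‖ ^ 2))).congr_deriv ?_
    rw [inner_sub_left]
    push_cast
    ring
  have hanti : AntitoneOn φ (Set.Icc 0 1) := by
    refine antitoneOn_of_hasDerivWithinAt_nonpos (convex_Icc 0 1)
      (fun t _ => (hφ t).continuousAt.continuousWithinAt)
      (fun t _ => (hφ t).hasDerivWithinAt) fun t ht => ?_
    rw [interior_Icc] at ht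
    have hlip_t := hlip (x + t • v) x
    rw [add_sub_cancel_left, norm_smul, Real.norm_of_nonneg ht.1.le] at hlip_t
    have hinner := (real_inner_le_norm (f' (x + t • v) - f' x) v).trans
      (mul_le_mul_of_nonneg_right hlip_t (norm_nonneg v))
    nlinarith
  have h01 := hanti (by simp) (by simp) zero_le_one
  simp only [φ, v, zero_smul, add_zero, one_smul, add_sub_cancel] at h01
  norm_num at h01
  linarith

end DescentLemma

section ConditionalExpectation

variable {Ω E : Type*} {m m0 : MeasurableSpace Ω} {μ : Measure Ω}
  [NormedAddCommGroup E] [InnerProductSpace ℝ E]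

theorem MeasureTheory.MemLp.integrable_inner {u v : Ω → E} (hu : MemLp u 2 μ)
    (hv : MemLp v 2 μ) :
    Integrable (fun ω => ⟪u ω, v ω⟫_ℝ) μ :=
  (L2.integrable_inner (𝕜 := ℝ) hu.toLp hv.toLp).congr <| by
    filter_upwards [hu.coeFn_toLp, hv.coeFn_toLp] with ω hu' hv'
    rw [hu', hv']

variable [IsFiniteMeasure μ] [CompleteSpace E] {X h : Ω → E}

theorem integral_inner_eq_integral_norm_sq_of_condExp_eq (hm : m ≤ m0)
    (hh : StronglyMeasurable[m] h) (hX : Integrable X μ)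
    (hhX : Integrable (fun ω => ⟪h ω, X ω⟫_ℝ) μ) (hcond : μ[X|m] =ᵐ[μ] h) :
    ∫ ω, ⟪h ω, X ω⟫_ℝ ∂μ = ∫ ω, ‖h ω‖ ^ 2 ∂μ := by
  have : SigmaFinite (μ.trim hm) := (isFiniteMeasure_trim hm).toSigmaFinite
  rw [← integral_condExp hm]
  refine integral_congr_ae ?_
  filter_upwards [condExp_bilin_of_stronglyMeasurable_left (innerSL ℝ) hh hhX hX, hcond]
    with ω hpull hω
  exact hpull.trans (by rw [hω, innerSL_apply_apply, real_inner_self_eq_norm_sq])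

theorem integral_norm_sq_eq_add_of_condExp_eq (hm : m ≤ m0) (hh : StronglyMeasurable[m] h)
    (hX : MemLp X 2 μ) (hh2 : MemLp h 2 μ) (hcond : μ[X|m] =ᵐ[μ] h) :
    ∫ ω, ‖X ω‖ ^ 2 ∂μ = ∫ ω, ‖h ω‖ ^ 2 ∂μ + ∫ ω, ‖X ω - h ω‖ ^ 2 ∂μ := by
  have hhX := hh2.integrable_inner hX
  have hX2 := hX.integrable_norm_pow (p := 2) two_ne_zero
  have hh2' := hh2.integrable_norm_pow (p := 2) two_ne_zero
  have hcross := integral_inner_eq_integral_norm_sq_of_condExp_eq hm hh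
    (hX.integrable one_le_two) hhX hcond
  have hexpand : (fun ω => ‖X ω - h ω‖ ^ 2)
      = fun ω => ‖X ω‖ ^ 2 - 2 * ⟪h ω, X ω⟫_ℝ + ‖h ω‖ ^ 2 := by
    ext ω
    rw [norm_sub_sq_real, real_inner_comm]
  rw [hexpand, integral_add _ hh2', integral_sub hX2 (hhX.const_mul 2), integral_const_mul,
    hcross]
  · ring
  · exact hX2.sub (hhX.const_mul 2)

end ConditionalExpectation

section StochasticGradientStep

variable {Ω E : Type*} {m m0 : MeasurableSpace Ω} {μ : Measure Ω} [IsProbabilityMeasure μ]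
  [NormedAddCommGroup E] [InnerProductSpace ℝ E] [CompleteSpace E]

theorem integral_le_of_stochastic_gradient_step {f fNext : E → ℝ} {f' : E → E} {L c a ρ : ℝ}
    (hf : ∀ x, HasGradientAt f (f' x) x) (hlip : ∀ x y, ‖f' x - f' y‖ ≤ L * ‖x - y‖)
    (hL : 0 ≤ L) (hdrift : ∀ x, |fNext x - f x| ≤ c) {x y G : Ω → E}
    (hy : ∀ ω, y ω = x ω - a • G ω) (hm : m ≤ m0) (hx : StronglyMeasurable[m] x)
    (hG : MemLp G 2 μ) (hf'x : Integrable (fun ω => ‖f' (x ω)‖ ^ 2) μ)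
    (hunbiased : μ[G|m] =ᵐ[μ] fun ω => f' (x ω))
    (hnoise : ∀ᵐ ω ∂μ, ‖G ω - f' (x ω)‖ ^ 2 ≤ ρ ^ 2)
    (hfx : Integrable (fun ω => f (x ω)) μ) (hfNexty : Integrable (fun ω => fNext (y ω)) μ) :
    ∫ ω, fNext (y ω) ∂μ ≤ ∫ ω, f (x ω) ∂μ - (a - L * a ^ 2 / 2) * ∫ ω, ‖f' (x ω)‖ ^ 2 ∂μ
      + L * a ^ 2 / 2 * ρ ^ 2 + c := by
  set h : Ω → E := fun ω => f' (x ω)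
  have hh : StronglyMeasurable[m] h :=
    (LipschitzWith.of_dist_le' fun u v => by
      simpa only [dist_eq_norm] using hlip u v).continuous.comp_stronglyMeasurable hx
  have hh2 : MemLp h 2 μ :=
    (memLp_two_iff_integrable_sq_norm (hh.mono hm).aestronglyMeasurable).2 hf'x
  have hhG := hh2.integrable_inner hG
  have hG2 := hG.integrable_norm_pow (p := 2) two_ne_zero
  have hcross := integral_inner_eq_integral_norm_sq_of_condExp_eq hm hh
    (hG.integrable one_le_two) hhG hunbiased
  have hsecond := integral_norm_sq_eq_add_of_condExp_eq hm hh hG hh2 hunbiased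
  have hvariance : ∫ ω, ‖G ω - h ω‖ ^ 2 ∂μ ≤ ρ ^ 2 := by
    simpa using integral_mono_ae ((hG.sub hh2).integrable_norm_pow (p := 2) two_ne_zero)
      (integrable_const (ρ ^ 2)) hnoise
  have hpointwise : ∀ ω, fNext (y ω)
      ≤ f (x ω) - a * ⟪h ω, G ω⟫_ℝ + L / 2 * a ^ 2 * ‖G ω‖ ^ 2 + c := by
    intro ω
    have hdescent := le_add_inner_add_half_mul_norm_sq_of_lipschitz_gradient hf hlip
      (x ω) (y ω)
    have hnext := (abs_le.mp (hdrift (y ω))).2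
    rw [hy ω] at hnext ⊢
    rw [hy ω, sub_sub_cancel_left, inner_neg_right, real_inner_smul_right, norm_neg, norm_smul,
      mul_pow, Real.norm_eq_abs, sq_abs] at hdescent
    linarith
  have hdiff : Integrable (fun ω => f (x ω) - a * ⟪h ω, G ω⟫_ℝ) μ := hfx.sub (hhG.const_mul a)
  have hsum : Integrable (fun ω => f (x ω) - a * ⟪h ω, G ω⟫_ℝ + L / 2 * a ^ 2 * ‖G ω‖ ^ 2) μ :=
    hdiff.add (hG2.const_mul _)
  calc ∫ ω, fNext (y ω) ∂μ
      ≤ ∫ ω, (f (x ω) - a * ⟪h ω, G ω⟫_ℝ + L / 2 * a ^ 2 * ‖G ω‖ ^ 2 + c) ∂μ :=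
        integral_mono hfNexty (hsum.add (integrable_const c)) hpointwise
    _ = ∫ ω, f (x ω) ∂μ - a * ∫ ω, ⟪h ω, G ω⟫_ℝ ∂μ + L / 2 * a ^ 2 * ∫ ω, ‖G ω‖ ^ 2 ∂μ + c := by
        rw [integral_add hsum (integrable_const c), integral_add hdiff (hG2.const_mul _),
          integral_sub hfx (hhG.const_mul a), integral_const_mul, integral_const_mul,
          integral_const, probReal_univ, one_smul]
    _ ≤ _ := by
        rw [hcross, hsecond]
        have hcoeff : 0 ≤ L / 2 * a ^ 2 := by positivity
        linarith [mul_le_mul_of_nonneg_left hvariance hcoeff]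

end StochasticGradientStep

theorem Finset.inf'_mul_sum_le_sum_mul {ι R : Type*} [CommSemiring R] [LinearOrder R]
    [IsOrderedRing R] {s : Finset ι} (hs : s.Nonempty) (f w : ι → R) (hw : ∀ i ∈ s, 0 ≤ w i) :
    s.inf' hs f * ∑ i ∈ s, w i ≤ ∑ i ∈ s, w i * f i := by
  rw [mul_sum]
  exact sum_le_sum fun i hi => by
    rw [mul_comm]
    exact mul_le_mul_of_nonneg_left (inf'_le f hi) (hw i hi)

/-- Non-stationary SGD convergence (Theorem 1 of the paper): for losses `l_k`, each
`L`-smooth, with per-step drift `|l_{k+1}(θ) - l_k(θ)| ≤ χ_k`, unbiased stochastic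
gradients with noise bounded by `ρ²`, and step sizes `0 < α_j < 2/L`, the minimum
expected squared gradient norm is bounded by `T_1 + T_2 + T_3`. -/
theorem stmt5 {d : ℕ} {Ω : Type*} [m0 : MeasurableSpace Ω] (μ : Measure Ω)
    [IsProbabilityMeasure μ]
    (l : ℕ → EuclideanSpace ℝ (Fin d) → ℝ)
    (gl : ℕ → EuclideanSpace ℝ (Fin d) → EuclideanSpace ℝ (Fin d)) (L ρ : ℝ) (χ : ℕ → ℝ)
    (hgrad : ∀ m x, HasGradientAt (l m) (gl m x) x)
    (hlip : ∀ m x y, ‖gl m x - gl m y‖ ≤ L * ‖x - y‖)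
    (hdrift : ∀ m x, |l (m + 1) x - l m x| ≤ χ m)
    (α : ℕ → ℝ) (hα : ∀ j, 0 < α j ∧ α j < 2 / L)
    (θ0 : EuclideanSpace ℝ (Fin d))
    (θ g : ℕ → Ω → EuclideanSpace ℝ (Fin d))
    (F : ℕ → MeasurableSpace Ω) (hF : ∀ j, F j ≤ m0)
    (hθ0 : ∀ ω, θ 0 ω = θ0)
    (hiter : ∀ j ω, θ (j + 1) ω = θ j ω - α (j + 1) • g (j + 1) ω)
    (hmeas : ∀ j, StronglyMeasurable[F j] (θ j))
    (hunbiased : ∀ j, μ[g (j + 1)|F j] =ᵐ[μ] fun ω => gl (j + 1) (θ j ω))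
    (hnoise : ∀ j, ∀ᵐ ω ∂μ, ‖g (j + 1) ω - gl (j + 1) (θ j ω)‖ ^ 2 ≤ ρ ^ 2)
    (hintl : ∀ m j, Integrable (fun ω => l m (θ j ω)) μ)
    (hintgl : ∀ m j, Integrable (fun ω => ‖gl m (θ j ω)‖ ^ 2) μ)
    (hintg : ∀ j, Integrable (g j) μ)
    (hintg2 : ∀ j, Integrable (fun ω => ‖g j ω‖ ^ 2) μ)
    (k : ℕ) :
    (Finset.range (k + 1)).inf' (Finset.nonempty_range_iff.mpr k.succ_ne_zero)
        (fun j => ∫ ω, ‖gl (j + 1) (θ j ω)‖ ^ 2 ∂μ)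
      ≤ (2 * (l 1 θ0 - ∫ ω, l (k + 2) (θ (k + 1) ω) ∂μ)
          + L * ρ ^ 2 * (∑ j ∈ Finset.range (k + 1), α (j + 1) ^ 2)
          + 2 * ∑ j ∈ Finset.range (k + 1), χ (j + 1)) /
        (∑ j ∈ Finset.range (k + 1), (2 * α (j + 1) - L * α (j + 1) ^ 2)) := by
  have hL : 0 < L := by
    by_contra! hL
    linarith [hα 0, div_nonpos_of_nonneg_of_nonpos zero_le_two hL]
  set ℓ : ℕ → ℝ := fun j => ∫ ω, l (j + 1) (θ j ω) ∂μ
  have hstep : ∀ j, (2 * α (j + 1) - L * α (j + 1) ^ 2) * ∫ ω, ‖gl (j + 1) (θ j ω)‖ ^ 2 ∂μ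
      ≤ 2 * (ℓ j - ℓ (j + 1)) + (L * ρ ^ 2 * α (j + 1) ^ 2 + 2 * χ (j + 1)) := fun j => by
    have := integral_le_of_stochastic_gradient_step (hgrad (j + 1)) (hlip (j + 1)) hL.le
      (hdrift (j + 1)) (hiter j) (hF j) (hmeas j)
      ((memLp_two_iff_integrable_sq_norm (hintg _).aestronglyMeasurable).2 (hintg2 _)) (hintgl (j + 1) j)
      (hunbiased j) (hnoise j) (hintl _ _) (hintl _ _)
    linarith
  have hweight : ∀ j, 0 < 2 * α (j + 1) - L * α (j + 1) ^ 2 := fun j => by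
    obtain ⟨hpos, hlt⟩ := hα (j + 1)
    rw [lt_div_iff₀ hL] at hlt
    nlinarith
  have hne := Finset.nonempty_range_iff.mpr k.succ_ne_zero
  rw [le_div_iff₀ (sum_pos (fun j _ => hweight j) hne)]
  calc _ ≤ ∑ j ∈ range (k + 1), (2 * α (j + 1) - L * α (j + 1) ^ 2)
        * ∫ ω, ‖gl (j + 1) (θ j ω)‖ ^ 2 ∂μ :=
        inf'_mul_sum_le_sum_mul hne _ _ fun j _ => (hweight j).le
    _ ≤ ∑ j ∈ range (k + 1),
          (2 * (ℓ j - ℓ (j + 1)) + (L * ρ ^ 2 * α (j + 1) ^ 2 + 2 * χ (j + 1))) :=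
        sum_le_sum fun j _ => hstep j
    _ = _ := by
        rw [sum_add_distrib, ← mul_sum, sum_range_sub', sum_add_distrib, ← mul_sum, ← mul_sum]
        simp only [zero_add, hθ0, integral_const, probReal_univ, smul_eq_mul, one_mul, ℓ]
        ring
end
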